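/- Suppose K ⊆ L are subgroups of G, K is above [H]^𝒪, and g ∈ G is such that K_g^H = K ∩ gHg⁻¹ lies in [H]^𝒪. Then L_g^H = L ∩ gHg⁻¹ also lies in [H]^𝒪, and L_g^H is the unique element of T_{L ≥ [H]^𝒪} = {L ∩ aHa⁻¹ : a ∈ G, L ∩ aHa⁻¹ ∈ [H]^𝒪} containing K_g^H. -/

import Mathlib

/-- A transfer system on a group `G`: a partial order `rel` on subgroups refining the
subgroup relation, closed under conjugation and restriction. -/
structure TransferSystem (G : Type*) [Group G] where
  rel : Subgroup G → Subgroup G → Prop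
  le_of_rel : ∀ {K H : Subgroup G}, rel K H → K ≤ H
  refl : ∀ H : Subgroup G, rel H H
  trans : ∀ {J K H : Subgroup G}, rel J K → rel K H → rel J H
  antisymm : ∀ {K H : Subgroup G}, rel K H → rel H K → K = H
  conj : ∀ (g : G) {K H : Subgroup G}, rel K H →
    rel (K.map (MulAut.conj g).toMonoidHom) (H.map (MulAut.conj g).toMonoidHom)
  restrict : ∀ {K H L : Subgroup G}, rel K H → L ≤ H → rel (K ⊓ L) L

/-- Conjugate subgroup `gKg⁻¹`. -/
def conjSub {G : Type*} [Group G] (g : G) (K : Subgroup G) : Subgroup G :=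
  K.map (MulAut.conj g).toMonoidHom

/-- `H_𝒪(J)`: the minimal subgroup containing `J` which transfers to `G` (the top subgroup). -/
noncomputable def HO {G : Type*} [Group G] (O : TransferSystem G) (J : Subgroup G) : Subgroup G :=
  sInf {H : Subgroup G | O.rel H ⊤ ∧ J ≤ H}

/-- `J ∈ [H]^𝒪`: the inseparability class of `H`, i.e. `H_𝒪(J)` is conjugate to `H`. -/
def inClass {G : Type*} [Group G] (O : TransferSystem G) (H J : Subgroup G) : Prop :=
  ∃ g : G, conjSub g (HO O J) = H

/-- `J` and `K` are 𝒪-inseparable: `H_𝒪(J)` and `H_𝒪(K)` are conjugate. -/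
def TSInseparable {G : Type*} [Group G] (O : TransferSystem G) (J K : Subgroup G) : Prop :=
  ∃ g : G, conjSub g (HO O J) = HO O K

/-!
Once `J ∈ [H]^𝒪` lies in a conjugate `aHa⁻¹`, that conjugate is `H_𝒪(J)`: the two have the
same order and `H_𝒪(J) ≤ aHa⁻¹` by minimality. Hence `H_𝒪(K ∩ gHg⁻¹) = gHg⁻¹`, and since `H_𝒪`
is monotone, `H_𝒪(L ∩ gHg⁻¹)` is squeezed between `gHg⁻¹` and itself. If `L ∩ aHa⁻¹ ∈ [H]^𝒪`
contains `K ∩ gHg⁻¹`, monotonicity gives `gHg⁻¹ ≤ aHa⁻¹`, and equal orders force equality.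
-/

section Conj

variable {G : Type*} [Group G]

lemma conjSub_conjSub (a b : G) (K : Subgroup G) :
    conjSub a (conjSub b K) = conjSub (a * b) K := by
  simp only [conjSub, Subgroup.map_map]
  congr 1
  ext x
  simp [mul_assoc]

lemma conjSub_one (K : Subgroup G) : conjSub 1 K = K := by
  ext x
  simp [conjSub]

lemma conjSub_top (g : G) : conjSub g (⊤ : Subgroup G) = ⊤ :=
  Subgroup.map_top_of_surjective _ (MulAut.conj g).surjective

lemma card_conjSub (g : G) (K : Subgroup G) : Nat.card (conjSub g K) = Nat.card K :=
  (Nat.card_congr ((MulAut.conj g).subgroupMap K).toEquiv).symm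

lemma conjSub_eq_of_le [Finite G] {a b : G} {K : Subgroup G} (h : conjSub a K ≤ conjSub b K) :
    conjSub a K = conjSub b K :=
  Subgroup.eq_of_le_of_card_ge h (by rw [card_conjSub, card_conjSub])

end Conj

namespace TransferSystem

variable {G : Type*} [Group G] (O : TransferSystem G)

lemma rel_conjSub_top {H : Subgroup G} (h : O.rel H ⊤) (g : G) : O.rel (conjSub g H) ⊤ :=
  conjSub_top g ▸ O.conj g h

lemma HO_le {J H : Subgroup G} (hH : O.rel H ⊤) (hJ : J ≤ H) : HO O J ≤ H :=
  sInf_le ⟨hH, hJ⟩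

lemma HO_mono {J J' : Subgroup G} (h : J ≤ J') : HO O J ≤ HO O J' :=
  sInf_le_sInf fun _ hM => ⟨hM.1, h.trans hM.2⟩

lemma inClass_of_HO_eq_conjSub {H J : Subgroup G} {g : G} (h : HO O J = conjSub g H) :
    inClass O H J :=
  ⟨g⁻¹, by rw [h, conjSub_conjSub, inv_mul_cancel, conjSub_one]⟩

lemma HO_eq_conjSub_of_inClass [Finite G] {H J : Subgroup G} (hH : O.rel H ⊤)
    (hJ : inClass O H J) {a : G} (hJa : J ≤ conjSub a H) : HO O J = conjSub a H := by
  obtain ⟨b, hb⟩ := hJ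
  refine Subgroup.eq_of_le_of_card_ge (O.HO_le (O.rel_conjSub_top hH a) hJa) ?_
  rw [card_conjSub, ← hb, card_conjSub]

end TransferSystem

theorem class_intersection_functorial_general {G : Type*} [Group G] [Finite G] (O : TransferSystem G)
    {H K L : Subgroup G} (hH : O.rel H ⊤) (hKL : K ≤ L) (g : G)
    (hKg : inClass O H (K ⊓ conjSub g H)) :
    inClass O H (L ⊓ conjSub g H) ∧
    ∀ a : G, inClass O H (L ⊓ conjSub a H) → K ⊓ conjSub g H ≤ L ⊓ conjSub a H →
      L ⊓ conjSub a H = L ⊓ conjSub g H := by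
  have hK : HO O (K ⊓ conjSub g H) = conjSub g H :=
    O.HO_eq_conjSub_of_inClass hH hKg inf_le_right
  have hL : HO O (L ⊓ conjSub g H) = conjSub g H :=
    le_antisymm (O.HO_le (O.rel_conjSub_top hH g) inf_le_right)
      (hK.symm.trans_le (O.HO_mono (inf_le_inf_right _ hKL)))
  refine ⟨O.inClass_of_HO_eq_conjSub hL, fun a ha hle => ?_⟩
  have hga : conjSub g H ≤ conjSub a H :=
    calc conjSub g H = HO O (K ⊓ conjSub g H) := hK.symm
      _ ≤ HO O (L ⊓ conjSub a H) := O.HO_mono hle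
      _ = conjSub a H := O.HO_eq_conjSub_of_inClass hH ha inf_le_right
  rw [conjSub_eq_of_le hga]

/-- If `K ≤ L`, `K` is above the class of `H`, and `K ⊓ gHg⁻¹` lies in the class, then
`L ⊓ gHg⁻¹` lies in the class and is the unique member of
`{L ⊓ aHa⁻¹ : a ∈ G} ∩ [H]^𝒪` containing `K ⊓ gHg⁻¹`. -/
theorem class_intersection_functorial {G : Type*} [Group G] [Finite G] (O : TransferSystem G)
    {H K L : Subgroup G} (hH : O.rel H ⊤) (hKL : K ≤ L)
    (habove : ∃ J : Subgroup G, inClass O H J ∧ J ≤ K) (g : G)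
    (hKg : inClass O H (K ⊓ conjSub g H)) :
    inClass O H (L ⊓ conjSub g H) ∧
    ∀ a : G, inClass O H (L ⊓ conjSub a H) → K ⊓ conjSub g H ≤ L ⊓ conjSub a H →
      L ⊓ conjSub a H = L ⊓ conjSub g H :=
  class_intersection_functorial_general O hH hKL g hKg
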